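/- arXiv:1409.4271 — 5 statements merged into one kernel-verified Lean document; each statement's English description precedes it below -/
import Mathlib

section
/- The ordered weighted ℓ1 functional Ω_w(x) = Σ_{i=1}^n w_i |x|_[i], where |x|_[i] denotes the i-th largest component of x in absolute value, is a norm on ℝ^n whenever w_1 ≥ w_2 ≥ ... ≥ w_n ≥ 0 and w ≠ 0. -/
open Finset

/-- The vector of absolute values of `x`, sorted in non-increasing order:
`absSorted x i` is the `(i+1)`-th largest entry of `|x|`. -/
noncomputable def absSorted {n : ℕ} (x : Fin n → ℝ) : Fin n → ℝ :=
  fun i => |x (Tuple.sort (fun j => -|x j|) i)|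

/-- The ordered weighted ℓ₁ functional `Ω_w(x) = ∑ i, w i * |x|_[i]`. -/
noncomputable def owl {n : ℕ} (w x : Fin n → ℝ) : ℝ := ∑ i, w i * absSorted x i

/-!
By the rearrangement inequality, for antitone `w` the functional `Ω_w(x)` is the largest of the
sums `∑ i, w i * |x (τ i)|` over all permutations `τ`. Each such sum is absolutely homogeneous and,
for `w ≥ 0`, subadditive in `x`, and both properties pass to the maximum. Positive definiteness
comes from `w i * |x j| ≤ Ω_w(x)`, obtained from the transposition exchanging `i` and `j`.
-/

variable {n : ℕ} {w : Fin n → ℝ}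

lemma antitone_absSorted (x : Fin n → ℝ) : Antitone (absSorted x) := by
  intro i j hij
  simpa [absSorted] using Tuple.monotone_sort (fun j => -|x j|) hij

lemma sum_mul_abs_comp_perm_le_owl (hw : Antitone w) (x : Fin n → ℝ) (τ : Equiv.Perm (Fin n)) :
    ∑ i, w i * |x (τ i)| ≤ owl w x := by
  set σ := Tuple.sort (fun j => -|x j|)
  have hx : ∀ i, |x (τ i)| = absSorted x ((σ⁻¹ * τ) i) := fun i => by simp [absSorted, σ]
  simp only [hx]
  exact (hw.monovary (antitone_absSorted x)).sum_mul_comp_perm_le_sum_mul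

lemma owl_le_of_forall_perm {x : Fin n → ℝ} {M : ℝ}
    (h : ∀ τ : Equiv.Perm (Fin n), ∑ i, w i * |x (τ i)| ≤ M) : owl w x ≤ M :=
  h _

lemma mul_abs_le_owl (hw : Antitone w) (hw₀ : ∀ i, 0 ≤ w i) (x : Fin n → ℝ) (i j : Fin n) :
    w i * |x j| ≤ owl w x :=
  calc w i * |x j| = w i * |x (Equiv.swap i j i)| := by rw [Equiv.swap_apply_left]
    _ ≤ ∑ k, w k * |x (Equiv.swap i j k)| :=
      single_le_sum (f := fun k => w k * |x (Equiv.swap i j k)|)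
        (fun k _ => mul_nonneg (hw₀ k) (abs_nonneg _)) (mem_univ i)
    _ ≤ owl w x := sum_mul_abs_comp_perm_le_owl hw x _

lemma owl_nonneg (hw₀ : ∀ i, 0 ≤ w i) (x : Fin n → ℝ) : 0 ≤ owl w x :=
  sum_nonneg fun i _ => mul_nonneg (hw₀ i) (abs_nonneg _)

@[simp] lemma owl_zero_right (w : Fin n → ℝ) : owl w 0 = 0 := by
  simp [owl, absSorted]

lemma eq_zero_of_owl_eq_zero (hw : Antitone w) (hw₀ : ∀ i, 0 ≤ w i) (hne : w ≠ 0)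
    {x : Fin n → ℝ} (hx : owl w x = 0) : x = 0 := by
  obtain ⟨i, hi⟩ := Function.ne_iff.mp hne
  have hwi : 0 < w i := (hw₀ i).lt_of_ne' hi
  funext j
  have hj := mul_abs_le_owl hw hw₀ x i j
  rw [hx] at hj
  exact abs_nonpos_iff.mp (nonpos_of_mul_nonpos_right hj hwi)

lemma owl_smul_le (hw : Antitone w) (c : ℝ) (x : Fin n → ℝ) :
    owl w (c • x) ≤ |c| * owl w x :=
  owl_le_of_forall_perm fun τ =>
    calc ∑ i, w i * |(c • x) (τ i)| = |c| * ∑ i, w i * |x (τ i)| := by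
          simp only [Pi.smul_apply, smul_eq_mul, abs_mul, mul_sum, mul_left_comm]
      _ ≤ |c| * owl w x := by gcongr; exact sum_mul_abs_comp_perm_le_owl hw x τ

lemma owl_smul (hw : Antitone w) (c : ℝ) (x : Fin n → ℝ) : owl w (c • x) = |c| * owl w x := by
  rcases eq_or_ne c 0 with rfl | hc
  · simp
  refine (owl_smul_le hw c x).antisymm ?_
  calc |c| * owl w x = |c| * owl w (c⁻¹ • c • x) := by rw [inv_smul_smul₀ hc]
    _ ≤ |c| * (|c⁻¹| * owl w (c • x)) := by gcongr; exact owl_smul_le hw _ _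
    _ = owl w (c • x) := by rw [abs_inv, mul_inv_cancel_left₀ (abs_ne_zero.mpr hc)]

lemma owl_add_le (hw : Antitone w) (hw₀ : ∀ i, 0 ≤ w i) (x y : Fin n → ℝ) :
    owl w (x + y) ≤ owl w x + owl w y :=
  owl_le_of_forall_perm fun τ =>
    calc ∑ i, w i * |(x + y) (τ i)| ≤ ∑ i, (w i * |x (τ i)| + w i * |y (τ i)|) := by
          gcongr with i
          rw [← mul_add]
          exact mul_le_mul_of_nonneg_left (abs_add_le _ _) (hw₀ i)
      _ = ∑ i, w i * |x (τ i)| + ∑ i, w i * |y (τ i)| := sum_add_distrib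
      _ ≤ owl w x + owl w y :=
        add_le_add (sum_mul_abs_comp_perm_le_owl hw x τ) (sum_mul_abs_comp_perm_le_owl hw y τ)

/-- If `w₁ ≥ w₂ ≥ ⋯ ≥ wₙ ≥ 0` and `w ≠ 0`, then `Ω_w` is a norm on `ℝⁿ`:
nonnegative, positive definite, absolutely homogeneous, and subadditive. -/
theorem owl_is_norm {n : ℕ} (w : Fin n → ℝ) (hmono : Antitone w)
    (hnonneg : ∀ i, 0 ≤ w i) (hne : w ≠ 0) :
    (∀ x : Fin n → ℝ, 0 ≤ owl w x) ∧
    (∀ x : Fin n → ℝ, owl w x = 0 ↔ x = 0) ∧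
    (∀ (c : ℝ) (x : Fin n → ℝ), owl w (c • x) = |c| * owl w x) ∧
    (∀ x y : Fin n → ℝ, owl w (x + y) ≤ owl w x + owl w y) :=
  ⟨owl_nonneg hnonneg,
    fun _ => ⟨eq_zero_of_owl_eq_zero hmono hnonneg hne, fun hx => hx ▸ owl_zero_right w⟩,
    owl_smul hmono, owl_add_le hmono hnonneg⟩
end

section
/- With the OSCAR weights w_i = λ1 + λ2(n − i) for i = 1,...,n (λ1, λ2 ≥ 0), the OWL norm equals the OSCAR regularizer: Ω_w(x) = λ1 ‖x‖_1 + λ2 Σ_{i<j} max{|x_i|, |x_j|}. -/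
open Finset

/-!
Sorting `|x|` into the non-increasing vector `a` changes neither `∑ |x i|` nor the
symmetric sum `∑_{i<j} max |x i| |x j|`. For the sorted vector, `max (a i) (a j) = a i`
whenever `i < j`, so `a i` is counted once for each of the `n - 1 - i` indices `j > i`,
which is exactly the OSCAR weight.
-/

theorem Equiv.Perm.min_max_symm_min_max {ι : Type*} [LinearOrder ι] (σ : Equiv.Perm ι)
    {a b : ι} (hab : a < b) :
    (min (σ.symm (min (σ a) (σ b))) (σ.symm (max (σ a) (σ b))),
      max (σ.symm (min (σ a) (σ b))) (σ.symm (max (σ a) (σ b)))) = (a, b) := by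
  rcases le_total (σ a) (σ b) with h | h
  · simp [min_eq_left h, max_eq_right h, hab.le]
  · simp [min_eq_right h, max_eq_left h, hab.le]

section PairSums

variable {ι M : Type*} [LinearOrder ι] [Fintype ι] [AddCommMonoid M]

theorem sum_filter_lt_comp_perm (f : ι → ι → M) (hf : ∀ a b, f a b = f b a)
    (σ : Equiv.Perm ι) :
    ∑ p ∈ univ.filter (fun p : ι × ι => p.1 < p.2), f (σ p.1) (σ p.2) =
      ∑ p ∈ univ.filter (fun p : ι × ι => p.1 < p.2), f p.1 p.2 := by
  have min_lt_max_of_lt : ∀ τ : Equiv.Perm ι, ∀ p : ι × ι, p.1 < p.2 →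
      min (τ p.1) (τ p.2) < max (τ p.1) (τ p.2) := fun τ p hp =>
    min_lt_max.2 (τ.injective.ne hp.ne)
  refine sum_nbij' (fun p => (min (σ p.1) (σ p.2), max (σ p.1) (σ p.2)))
    (fun q => (min (σ.symm q.1) (σ.symm q.2), max (σ.symm q.1) (σ.symm q.2)))
    (fun p hp => by simpa using min_lt_max_of_lt σ p (by simpa using hp))
    (fun q hq => by simpa using min_lt_max_of_lt σ.symm q (by simpa using hq))
    (fun p hp => σ.min_max_symm_min_max (by simpa using hp))
    (fun q hq => by
      simpa [Prod.ext_iff] using Equiv.Perm.min_max_symm_min_max σ.symm (by simpa using hq)) ?_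
  intro p _
  rcases le_total (σ p.1) (σ p.2) with h | h
  · simp [min_eq_left h, max_eq_right h]
  · simp [min_eq_right h, max_eq_left h, hf]

theorem sum_filter_lt_fst [LocallyFiniteOrderTop ι] (g : ι → M) :
    ∑ p ∈ univ.filter (fun p : ι × ι => p.1 < p.2), g p.1 = ∑ i, #(Ioi i) • g i := by
  rw [sum_filter, Fintype.sum_prod_type]
  refine sum_congr rfl fun i _ => ?_
  rw [← sum_filter, ← sum_const]
  congr 1
  ext j
  simp

end PairSums

theorem Antitone.sum_filter_lt_max {n : ℕ} {a : Fin n → ℝ} (ha : Antitone a) :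
    ∑ p ∈ univ.filter (fun p : Fin n × Fin n => p.1 < p.2), max (a p.1) (a p.2) =
      ∑ i : Fin n, ((n : ℝ) - 1 - (i : ℕ)) * a i := by
  rw [sum_congr rfl fun p hp => max_eq_left (ha (mem_filter.1 hp).2.le), sum_filter_lt_fst]
  refine sum_congr rfl fun i _ => ?_
  have hi := i.isLt
  rw [Fin.card_Ioi, nsmul_eq_mul, Nat.cast_sub (by omega), Nat.cast_sub (by omega)]
  simp

section AbsSorted

variable {n : ℕ} (x : Fin n → ℝ)

theorem absSorted_antitone : Antitone (absSorted x) := fun i j hij => by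
  simpa [absSorted] using Tuple.monotone_sort (fun j => -|x j|) hij

theorem sum_absSorted : ∑ i, absSorted x i = ∑ i, |x i| :=
  Equiv.sum_comp _ (fun j => |x j|)

theorem sum_filter_lt_max_absSorted :
    ∑ p ∈ univ.filter (fun p : Fin n × Fin n => p.1 < p.2),
        max (absSorted x p.1) (absSorted x p.2) =
      ∑ p ∈ univ.filter (fun p : Fin n × Fin n => p.1 < p.2), max |x p.1| |x p.2| :=
  sum_filter_lt_comp_perm (fun i j => max |x i| |x j|) (fun _ _ => max_comm _ _) _

end AbsSorted

theorem owl_eq_oscar_general {n : ℕ} (l1 l2 : ℝ) (x : Fin n → ℝ) :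
    owl (fun i => l1 + l2 * ((n : ℝ) - 1 - (i : ℕ))) x =
      l1 * (∑ i, |x i|) +
        l2 * ∑ p ∈ univ.filter (fun p : Fin n × Fin n => p.1 < p.2), max |x p.1| |x p.2| := by
  rw [← sum_absSorted, ← sum_filter_lt_max_absSorted, (absSorted_antitone x).sum_filter_lt_max,
    mul_sum, mul_sum, ← sum_add_distrib, owl]
  exact sum_congr rfl fun i _ => by ring

/-- With OSCAR weights w_i = lambda1 + lambda2 (n - i) (1-indexed), the OWL norm equals
the OSCAR regularizer lambda1 * l1-norm + lambda2 * sum over pairs i<j of max(|x_i|,|x_j|). -/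
theorem owl_eq_oscar {n : ℕ} (l1 l2 : ℝ) (hl1 : 0 ≤ l1) (hl2 : 0 ≤ l2) (x : Fin n → ℝ) :
    owl (fun i => l1 + l2 * ((n : ℝ) - 1 - (i : ℕ))) x =
      l1 * (∑ i, |x i|) +
        l2 * ∑ p ∈ univ.filter (fun p : Fin n × Fin n => p.1 < p.2), max |x p.1| |x p.2| :=
  owl_eq_oscar_general l1 l2 x
end

section
/- Let x ∈ ℝ^n have non-increasing non-negative entries with Ω_w(x) = 1, where w is in the monotone non-negative cone with w ≠ 0. Then x lies in the convex hull of {b^{(1)},...,b^{(n)}}, where b^{(i)} has first i entries equal to τ_i = (Σ_{j=1}^i w_j)^{-1} and the rest zero. Specifically, x = Σ_i θ_i b^{(i)} with θ_i = (x_i − x_{i+1})/τ_i ≥ 0 (taking x_{n+1} = 0) and Σ_i θ_i = 1. -/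
open Finset

/-- tau_i = (w_1 + ... + w_i)⁻¹ (0-indexed: sum over j ≤ i). -/
noncomputable def tau {n : ℕ} (w : Fin n → ℝ) (i : Fin n) : ℝ :=
  (∑ j ∈ Finset.Iic i, w j)⁻¹

/-- The atom b⁽ⁱ⁾: first i+1 entries equal to tau_i, remaining entries zero. -/
noncomputable def atomVec {n : ℕ} (w : Fin n → ℝ) (i : Fin n) : Fin n → ℝ :=
  fun j => if j ≤ i then tau w i else 0

/-- The atomic set A: all signed permutations of the atoms b⁽¹⁾, ..., b⁽ⁿ⁾. -/
noncomputable def atomSet {n : ℕ} (w : Fin n → ℝ) : Set (Fin n → ℝ) :=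
  { a | ∃ (σ : Equiv.Perm (Fin n)) (s : Fin n → ℝ) (i : Fin n),
      (∀ j, s j = 1 ∨ s j = -1) ∧ a = fun j => s j * atomVec w i (σ j) }

/-!
Write `d_i = x_i - x_{i+1}` (with `x_n = 0`) and `S_i = w_0 + ... + w_i`, so that `θ_i = d_i S_i`.
Since `w` is non-increasing, non-negative and non-zero, every `S_i` is positive.
The differences telescope, `x_j = ∑_{i ≥ j} d_i`, which is the identity `x = ∑ θ_i b⁽ⁱ⁾`;
exchanging the order of summation gives `∑ θ_i = ∑_i d_i S_i = ∑_j w_j x_j = 1`.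
-/

lemma sum_Iic_pos_of_antitone {ι : Type*} [LinearOrder ι] [LocallyFiniteOrderBot ι]
    {w : ι → ℝ} (hmono : Antitone w) (hnonneg : ∀ i, 0 ≤ w i) (hne : w ≠ 0) (i : ι) :
    0 < ∑ j ∈ Iic i, w j := by
  obtain ⟨k, hk⟩ := Function.ne_iff.mp hne
  have hwk : 0 < w k := (hnonneg k).lt_of_ne' hk
  calc 0 < w (min i k) := hwk.trans_le (hmono (min_le_right i k))
    _ ≤ ∑ j ∈ Iic i, w j :=
      single_le_sum (fun j _ => hnonneg j) (mem_Iic.mpr (min_le_left i k))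

lemma sum_mul_sum_Iic_eq_sum_mul_sum_Ici {ι R : Type*} [Fintype ι] [Preorder ι]
    [LocallyFiniteOrderTop ι] [LocallyFiniteOrderBot ι] [CommSemiring R] (d w : ι → R) :
    ∑ i, d i * ∑ j ∈ Iic i, w j = ∑ j, w j * ∑ i ∈ Ici j, d i := by
  simp_rw [mul_sum]
  rw [sum_comm' (t' := univ) (s' := Ici)
    (fun i j => by simp only [mem_univ, true_and, mem_Iic, mem_Ici, and_true])]
  exact sum_congr rfl fun j _ => sum_congr rfl fun i _ => mul_comm _ _

def finDiff {M : Type*} [AddGroup M] {n : ℕ} (x : Fin n → M) (i : Fin n) : M :=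
  x i - if h : (i : ℕ) + 1 < n then x ⟨(i : ℕ) + 1, h⟩ else 0

lemma finDiff_nonneg {n : ℕ} {x : Fin n → ℝ} (hx : Antitone x) (hx0 : ∀ i, 0 ≤ x i)
    (i : Fin n) : 0 ≤ finDiff x i := by
  unfold finDiff
  split
  · exact sub_nonneg.mpr (hx (Fin.mk_le_mk.mpr (Nat.le_succ _)))
  · simpa using hx0 i

lemma sum_Ici_finDiff {M : Type*} [AddCommGroup M] {n : ℕ} (x : Fin n → M) (j : Fin n) :
    ∑ i ∈ Ici j, finDiff x i = x j := by
  let X : ℕ → M := fun m => if h : m < n then x ⟨m, h⟩ else 0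
  have hdiff : ∀ i : Fin n, finDiff x i = -(X (i + 1) - X i) := by
    intro i
    simp only [finDiff, X, i.isLt, dif_pos, neg_sub]
  calc ∑ i ∈ Ici j, finDiff x i = ∑ m ∈ (Ici j).map Fin.valEmbedding, -(X (m + 1) - X m) := by
        rw [sum_map]; exact sum_congr rfl fun i _ => hdiff i
    _ = x j := by
        rw [Fin.map_valEmbedding_Ici, sum_neg_distrib, sum_Ico_sub X j.isLt.le]
        simp [X]

lemma sum_Iic_mul_atomVec {n : ℕ} {w : Fin n → ℝ} {i : Fin n} (hS : ∑ k ∈ Iic i, w k ≠ 0)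
    (j : Fin n) : (∑ k ∈ Iic i, w k) * atomVec w i j = if j ≤ i then 1 else 0 := by
  simp only [atomVec, tau, mul_ite, mul_zero, mul_inv_cancel₀ hS]

/-- If x is non-increasing and non-negative with Omega_w(x) = wᵀx = 1, then x is the
convex combination of the atoms b⁽ⁱ⁾ with coefficients θ_i = (x_i − x_{i+1})/tau_i. -/
theorem owl_conv_combination {n : ℕ} (w : Fin n → ℝ) (hmono : Antitone w)
    (hnonneg : ∀ i, 0 ≤ w i) (hne : w ≠ 0) (x : Fin n → ℝ)
    (hx : Antitone x) (hx0 : ∀ i, 0 ≤ x i) (hsum : ∑ i, w i * x i = 1)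
    (θ : Fin n → ℝ)
    (hθ : ∀ i : Fin n,
      θ i = (x i - if h : (i : ℕ) + 1 < n then x ⟨(i : ℕ) + 1, h⟩ else 0) / tau w i) :
    (∀ i, 0 ≤ θ i) ∧ (∑ i, θ i = 1) ∧ (∀ j, x j = ∑ i, θ i * atomVec w i j) ∧
      x ∈ convexHull ℝ (Set.range (atomVec w)) := by
  have hS := sum_Iic_pos_of_antitone hmono hnonneg hne
  have hθS : ∀ i, θ i = finDiff x i * ∑ k ∈ Iic i, w k := fun i => by
    rw [hθ i, tau, div_inv_eq_mul, finDiff]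
  have hθ0 : ∀ i, 0 ≤ θ i := fun i => hθS i ▸ mul_nonneg (finDiff_nonneg hx hx0 i) (hS i).le
  have hθsum : ∑ i, θ i = 1 := by
    simp_rw [hθS, sum_mul_sum_Iic_eq_sum_mul_sum_Ici, sum_Ici_finDiff, hsum]
  have hrepr : ∀ j, x j = ∑ i, θ i * atomVec w i j := fun j => by
    simp_rw [hθS, mul_assoc, sum_Iic_mul_atomVec (hS _).ne', mul_ite, mul_one, mul_zero,
      ← sum_filter, filter_le_eq_Ici, sum_Ici_finDiff]
  have hx_eq : x = ∑ i, θ i • atomVec w i := funext fun j => by simpa using hrepr j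
  refine ⟨hθ0, hθsum, hrepr, hx_eq ▸ ?_⟩
  exact (convex_convexHull ℝ _).sum_mem (fun i _ => hθ0 i) hθsum
    fun i _ => subset_convexHull ℝ _ ⟨i, rfl⟩
end

section
/- Let w be in the monotone non-negative cone with w ≠ 0, let b have non-increasing non-negative entries with w^T b = 1, and let Q = DP where P is a permutation matrix and D is a diagonal matrix with ±1 entries. Then w^T Q b ≤ 1. -/
open Finset

theorem Finset.sum_mul_mul_le_sum_mul_of_le_one {ι R : Type*} [Semiring R] [PartialOrder R]
    [IsOrderedRing R] (s : Finset ι) {w c d : ι → R} (hw : ∀ i ∈ s, 0 ≤ w i)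
    (hc : ∀ i ∈ s, 0 ≤ c i) (hd : ∀ i ∈ s, d i ≤ 1) :
    ∑ i ∈ s, w i * (d i * c i) ≤ ∑ i ∈ s, w i * c i :=
  sum_le_sum fun i hi => mul_le_mul_of_nonneg_left (mul_le_of_le_one_left (hc i hi) (hd i hi))
    (hw i hi)

theorem signed_perm_inner_le_one_general {n : ℕ} (w b : Fin n → ℝ)
    (hwmono : Antitone w) (hwnonneg : ∀ i, 0 ≤ w i)
    (hbmono : Antitone b) (hbnonneg : ∀ i, 0 ≤ b i)
    (hwb : ∑ i, w i * b i = 1)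
    (σ : Equiv.Perm (Fin n)) (d : Fin n → ℝ) (hd : ∀ i, d i = 1 ∨ d i = -1) :
    ∑ i, w i * (d i * b (σ i)) ≤ 1 := by
  have hd_le_one : ∀ i ∈ univ, d i ≤ 1 := fun i _ => by rcases hd i with h | h <;> linarith
  calc ∑ i, w i * (d i * b (σ i))
      ≤ ∑ i, w i * b (σ i) :=
        univ.sum_mul_mul_le_sum_mul_of_le_one (fun i _ => hwnonneg i) (fun i _ => hbnonneg _)
          hd_le_one
    _ ≤ ∑ i, w i * b i := (hwmono.monovary hbmono).sum_mul_comp_perm_le_sum_mul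
    _ = 1 := hwb

/-- If w is in the monotone non-negative cone, b is non-increasing and non-negative
with wᵀb = 1, and Q = DP is a signed permutation (D diagonal ±1, P a permutation),
then wᵀ(Qb) ≤ 1. -/
theorem signed_perm_inner_le_one {n : ℕ} (w b : Fin n → ℝ)
    (hwmono : Antitone w) (hwnonneg : ∀ i, 0 ≤ w i) (hwne : w ≠ 0)
    (hbmono : Antitone b) (hbnonneg : ∀ i, 0 ≤ b i)
    (hwb : ∑ i, w i * b i = 1)
    (σ : Equiv.Perm (Fin n)) (d : Fin n → ℝ) (hd : ∀ i, d i = 1 ∨ d i = -1) :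
    ∑ i, w i * (d i * b (σ i)) ≤ 1 :=
  signed_perm_inner_le_one_general w b hwmono hwnonneg hbmono hbnonneg hwb σ d hd
end

section
/- The Euclidean projection onto the monotone non-negative cone K_{m+} equals the composition of the projection onto the monotone cone K_m followed by the projection onto the non-negative orthant: proj_{K_{m+}}(v) = proj_{ℝ^n_+}(proj_{K_m}(v)) for all v ∈ ℝ^n. -/
open Finset

/-- The monotone cone in ℝⁿ. -/
def monoCone (n : ℕ) : Set (Fin n → ℝ) := { x | Antitone x }

/-- The monotone non-negative cone in ℝⁿ. -/
def monoNonnegCone (n : ℕ) : Set (Fin n → ℝ) :=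
  { x | Antitone x ∧ ∀ i, 0 ≤ x i }

/-!
A point `p` of a convex cone `K` minimises `‖u - ·‖` on `K` exactly when `⟪u - p, x⟫ ≤ 0` for
`x ∈ K` and `⟪u - p, p⟫ = 0`. For the projection `p` onto the monotone cone both summands of
`p = max p 0 + min p 0` are again monotone, so `⟪u - p, max p 0⟫ = 0` too. As
`u - max p 0 = (u - p) + min p 0`, with `min p 0` orthogonal to `max p 0` and having non-positive
inner product with every non-negative vector, `max p 0` satisfies the variational inequality
`⟪u - max p 0, x - max p 0⟫ ≤ 0` on the monotone non-negative cone.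
-/

open RealInnerProductSpace

section ConeProjection

variable {F : Type*} [NormedAddCommGroup F] [InnerProductSpace ℝ F] {u p : F}

theorem real_inner_sub_sub_nonpos_of_isMinOn {K : Set F} (hK : Convex ℝ K) (hp : p ∈ K)
    (hmin : IsMinOn (‖u - ·‖) K p) {w : F} (hw : w ∈ K) : ⟪u - p, w - p⟫ ≤ 0 := by
  have : Nonempty K := ⟨⟨p, hp⟩⟩
  refine (norm_eq_iInf_iff_real_inner_le_zero hK hp).1 (le_antisymm ?_ ?_) w hw
  · exact le_ciInf fun w => hmin w.2
  · exact ciInf_le ⟨0, Set.forall_mem_range.2 fun _ => norm_nonneg _⟩ (⟨p, hp⟩ : K)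

theorem isMinOn_of_real_inner_sub_sub_nonpos {K : Set F} (h : ∀ w ∈ K, ⟪u - p, w - p⟫ ≤ 0) :
    IsMinOn (‖u - ·‖) K p := by
  intro w hw
  have hsq : ‖u - w‖ ^ 2 = ‖u - p‖ ^ 2 - 2 * ⟪u - p, w - p⟫ + ‖w - p‖ ^ 2 := by
    rw [← norm_sub_sq_real, sub_sub_sub_cancel_right]
  have : ‖u - p‖ ^ 2 ≤ ‖u - w‖ ^ 2 := by nlinarith [h w hw, sq_nonneg ‖w - p‖]
  exact (sq_le_sq₀ (norm_nonneg _) (norm_nonneg _)).1 this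

namespace PointedCone

variable (K : PointedCone ℝ F)

theorem real_inner_sub_nonpos_of_isMinOn (hp : p ∈ K) (hmin : IsMinOn (‖u - ·‖) K p) {x : F}
    (hx : x ∈ K) : ⟪u - p, x⟫ ≤ 0 := by
  simpa using real_inner_sub_sub_nonpos_of_isMinOn K.convex hp hmin (K.add_mem hp hx)

theorem real_inner_sub_self_eq_zero_of_isMinOn (hp : p ∈ K) (hmin : IsMinOn (‖u - ·‖) K p) :
    ⟪u - p, p⟫ = 0 := by
  have := real_inner_sub_sub_nonpos_of_isMinOn K.convex hp hmin K.zero_mem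
  rw [zero_sub, inner_neg_right] at this
  linarith [K.real_inner_sub_nonpos_of_isMinOn hp hmin hp]

theorem real_inner_sub_eq_zero_of_add_eq (hp : p ∈ K) (hmin : IsMinOn (‖u - ·‖) K p)
    {q w : F} (hq : q ∈ K) (hw : w ∈ K) (hqw : q + w = p) : ⟪u - p, q⟫ = 0 := by
  have hsum : ⟪u - p, q⟫ + ⟪u - p, w⟫ = 0 := by
    rw [← inner_add_right, hqw, K.real_inner_sub_self_eq_zero_of_isMinOn hp hmin]
  linarith [K.real_inner_sub_nonpos_of_isMinOn hp hmin hq,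
    K.real_inner_sub_nonpos_of_isMinOn hp hmin hw]

theorem isMinOn_of_add_eq {L : Set F} (hLK : L ⊆ K) (hp : p ∈ K)
    (hmin : IsMinOn (‖u - ·‖) K p) {q w : F} (hq : q ∈ L) (hw : w ∈ K) (hqw : q + w = p)
    (hwL : ∀ x ∈ L, ⟪w, x⟫ ≤ 0) (hwq : ⟪w, q⟫ = 0) : IsMinOn (‖u - ·‖) L q := by
  refine isMinOn_of_real_inner_sub_sub_nonpos fun x hx => ?_
  have hpq := K.real_inner_sub_eq_zero_of_add_eq hp hmin (hLK hq) hw hqw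
  have hsplit : u - q = (u - p) + w := by rw [← hqw]; abel
  rw [hsplit, inner_add_left, inner_sub_right, inner_sub_right]
  linarith [K.real_inner_sub_nonpos_of_isMinOn hp hmin (hLK hx), hwL x hx]

end PointedCone

end ConeProjection

section EuclideanSpace

variable {ι : Type*} [Fintype ι]

-- The sums of squares are read as norms in `EuclideanSpace ℝ ι`: `ι → ℝ` carries the sup norm.

theorem EuclideanSpace.norm_toLp_sub_toLp_sq (x y : ι → ℝ) :
    ‖WithLp.toLp 2 x - WithLp.toLp 2 y‖ ^ 2 = ∑ i, (x i - y i) ^ 2 := by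
  simp [EuclideanSpace.norm_eq, Real.sq_sqrt (Finset.sum_nonneg fun i _ => sq_nonneg _)]

theorem EuclideanSpace.isMinOn_norm_toLp_sub_iff {S : Set (ι → ℝ)} {v p : ι → ℝ} :
    IsMinOn (‖WithLp.toLp 2 v - ·‖) (WithLp.ofLp ⁻¹' S) (WithLp.toLp 2 p) ↔
      ∀ x ∈ S, ∑ i, (p i - v i) ^ 2 ≤ ∑ i, (x i - v i) ^ 2 := by
  simp only [isMinOn_iff, (WithLp.toLp_surjective 2).forall, Set.mem_preimage]
  refine forall₂_congr fun x _ => ?_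
  rw [norm_sub_rev, norm_sub_rev _ (WithLp.toLp 2 x), ← sq_le_sq₀ (norm_nonneg _) (norm_nonneg _),
    norm_toLp_sub_toLp_sq, norm_toLp_sub_toLp_sq]

theorem EuclideanSpace.real_inner_toLp_toLp (x y : ι → ℝ) :
    ⟪WithLp.toLp 2 x, WithLp.toLp 2 y⟫ = ∑ i, x i * y i := by
  simp [PiLp.inner_apply, mul_comm]

end EuclideanSpace

def antitoneCone (ι : Type*) [Preorder ι] : PointedCone ℝ (EuclideanSpace ℝ ι) where
  carrier := {x | Antitone x}
  add_mem' hx hy := hx.add hy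
  zero_mem' := antitone_const
  smul_mem' c _ hx := hx.const_smul c.2

/-- The Euclidean projection onto the monotone non-negative cone is the projection
onto the monotone cone followed by entry-wise clipping at zero. -/
theorem proj_monoNonnegCone_eq_clip_proj_monoCone {n : ℕ} (v p : Fin n → ℝ)
    (hp : p ∈ monoCone n ∧ ∀ x ∈ monoCone n,
      ∑ i, (p i - v i) ^ 2 ≤ ∑ i, (x i - v i) ^ 2) :
    (fun i => max (p i) 0) ∈ monoNonnegCone n ∧
      ∀ x ∈ monoNonnegCone n,
        ∑ i, (max (p i) 0 - v i) ^ 2 ≤ ∑ i, (x i - v i) ^ 2 := by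
  obtain ⟨hpK, hpmin⟩ := hp
  have hq : (fun i => max (p i) 0) ∈ monoNonnegCone n :=
    ⟨hpK.max antitone_const, fun i => le_max_right _ _⟩
  refine ⟨hq, EuclideanSpace.isMinOn_norm_toLp_sub_iff.1 ?_⟩
  refine (antitoneCone (Fin n)).isMinOn_of_add_eq (fun x hx => hx.1) hpK
    (EuclideanSpace.isMinOn_norm_toLp_sub_iff.2 hpmin) (w := WithLp.toLp 2 fun i => min (p i) 0)
    hq (hpK.min antitone_const) ?_ ?_ ?_
  · ext i
    exact (max_add_min (p i) 0).trans (add_zero _)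
  · intro x hx
    rw [EuclideanSpace.real_inner_toLp_toLp]
    exact Finset.sum_nonpos fun i _ => mul_nonpos_of_nonpos_of_nonneg (min_le_right _ _) (hx.2 i)
  · rw [EuclideanSpace.real_inner_toLp_toLp]
    exact Finset.sum_eq_zero fun i _ => by rw [min_mul_max, mul_zero]
end
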